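/- arXiv:2106.03729 — 2 statements merged into one kernel-verified Lean document; each statement's English description precedes it below -/
import Mathlib

section
/- (Dirac) A finite simple graph G on n ≥ 3 vertices in which every vertex has degree at least n/2 contains a Hamilton cycle. -/
/-!
Dirac's condition implies Ore's: `deg u + deg v ≥ n` for all non-adjacent `u ≠ v`. Ore's
condition passes to supergraphs, so by downward induction on `G`, starting from the complete
graph, it suffices to show: if `deg u + deg v ≥ n` and `G ⊔ edge u v` has a Hamiltonian cycle,
then so does `G` (Bondy–Chvátal). Removing `uv` from that cycle leaves a Hamiltonian path
`u = x₀, …, x_{n-1} = v` of `G`. Among its `n - 1` edges `x_i x_{i+1}`, `deg v` have `x_i ~ v`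
and `deg u` have `u ~ x_{i+1}`, so one edge has both, and then
`x₀ … x_i x_{n-1} x_{n-2} … x_{i+1} x₀` is a Hamiltonian cycle.
-/

namespace SimpleGraph.Walk

variable {V : Type*} {G : SimpleGraph V}

theorem exists_eq_append_cons_of_mem_darts {u v : V} {p : G.Walk u v} {d : G.Dart}
    (hd : d ∈ p.darts) :
    ∃ (q : G.Walk u d.fst) (r : G.Walk d.snd v), p = q.append (cons d.adj r) := by
  induction p with
  | nil => simp at hd
  | cons h p ih =>
    rcases List.mem_cons.mp hd with rfl | hd
    · exact ⟨nil, p, rfl⟩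
    · obtain ⟨q, r, rfl⟩ := ih hd
      exact ⟨cons h q, r, rfl⟩

theorem IsPath.fst_ne_of_mem_darts {u v : V} {p : G.Walk u v} (hp : p.IsPath) {d : G.Dart}
    (hd : d ∈ p.darts) : d.fst ≠ v := by
  have hnodup := hp.support_nodup
  rw [← p.map_fst_darts_append, List.nodup_append] at hnodup
  rintro rfl
  exact hnodup.2.2 _ (List.mem_map_of_mem hd) _ (List.mem_singleton_self _) rfl

variable [DecidableEq V]

theorem IsHamiltonian.reverse {u v : V} {p : G.Walk u v} (hp : p.IsHamiltonian) :
    p.reverse.IsHamiltonian := fun x => by simpa [support_reverse] using hp x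

theorem IsHamiltonian.transfer {H : SimpleGraph V} {u v : V} {p : G.Walk u v}
    (hp : p.IsHamiltonian) (hH : ∀ e ∈ p.edges, e ∈ H.edgeSet) :
    (p.transfer H hH).IsHamiltonian := by
  simpa [IsHamiltonian, support_transfer] using hp

theorem IsHamiltonianCycle.transfer {H : SimpleGraph V} {u : V} {p : G.Walk u u}
    (hp : p.IsHamiltonianCycle) (hH : ∀ e ∈ p.edges, e ∈ H.edgeSet) :
    (p.transfer H hH).IsHamiltonianCycle := by
  rw [isHamiltonianCycle_iff_isCycle_and_support_count_tail_eq_one] at hp ⊢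
  exact ⟨hp.1.transfer hH, by simpa only [support_transfer] using hp.2⟩

theorem IsHamiltonianCycle.exists_isHamiltonian_of_mem_darts {w : V} {c : G.Walk w w}
    (hc : c.IsHamiltonianCycle) {d : G.Dart} (hd : d ∈ c.darts) :
    ∃ q : G.Walk d.snd d.fst, q.IsHamiltonian ∧ d.edge ∉ q.edges := by
  have hfst := c.dart_fst_mem_support_of_mem_darts hd
  have hc' := hc.rotate hfst
  have hd' : d ∈ (c.rotate _ hfst).darts := (rotate_darts c _ hfst).mem_iff.mpr hd
  generalize c.rotate _ hfst = c' at hc' hd'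
  obtain ⟨⟨a, b⟩, hab⟩ := d
  cases c' with
  | nil => simp at hd'
  | cons h q =>
    have hq : q.IsHamiltonian := by simpa [IsHamiltonian] using hc'.isHamiltonian_tail
    rcases List.mem_cons.mp hd' with heq | hdq
    · cases heq
      exact ⟨q, hq, (List.nodup_cons.mp hc'.edges_nodup).1⟩
    · exact absurd rfl (hq.isPath.fst_ne_of_mem_darts hdq)

theorem IsHamiltonianCycle.exists_isHamiltonian_of_mem_edges {w u v : V} {c : G.Walk w w}
    (hc : c.IsHamiltonianCycle) (he : s(u, v) ∈ c.edges) :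
    ∃ q : G.Walk u v, q.IsHamiltonian ∧ s(u, v) ∉ q.edges := by
  obtain ⟨⟨⟨a, b⟩, hab⟩, hd, hde⟩ := List.mem_map.mp he
  obtain ⟨q, hq, hqe⟩ := hc.exists_isHamiltonian_of_mem_darts hd
  simp only [Dart.edge_mk, Sym2.eq_iff] at hde hqe
  rcases hde with ⟨rfl, rfl⟩ | ⟨rfl, rfl⟩
  · exact ⟨q.reverse, hq.reverse, by simpa [Sym2.eq_swap] using hqe⟩
  · exact ⟨q, hq, by rwa [Sym2.eq_swap]⟩

variable [Fintype V]

theorem IsHamiltonian.isHamiltonianCycle_cons_append_cons_reverse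
    {u v a b : V} {q : G.Walk u a} {r : G.Walk b v} {hab : G.Adj a b}
    (hp : (q.append (cons hab r)).IsHamiltonian) (hub : G.Adj u b) (hav : G.Adj a v)
    (hn : 3 ≤ Fintype.card V) :
    (cons hub.symm (q.append (cons hav r.reverse))).IsHamiltonianCycle := by
  have hlen := hp.length_eq
  simp only [length_append, length_cons] at hlen
  have hperm : (q.append (cons hav r.reverse)).support.Perm (q.append (cons hab r)).support := by
    simpa [support_append] using (List.reverse_perm r.support).append_left q.support
  rw [isHamiltonianCycle_iff_isCycle_and_length_eq, isCycle_iff_isPath_tail_and_le_length]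
  refine ⟨⟨?_, ?_⟩, ?_⟩
  · simpa [isPath_def, hperm.nodup_iff] using hp.isPath.support_nodup
  all_goals simp only [length_cons, length_append, length_reverse]; omega

variable [DecidableRel G.Adj]

theorem IsHamiltonian.card_filter_darts_fst_adj {u v : V} {p : G.Walk u v}
    (hp : p.IsHamiltonian) :
    (p.darts.toFinset.filter fun d => G.Adj d.fst v).card = G.degree v := by
  have hinj : Set.InjOn (fun d : G.Dart => d.fst) {d | d ∈ p.darts} := by
    refine List.inj_on_of_nodup_map ?_
    rw [map_fst_darts]
    exact hp.isPath.support_nodup.sublist (List.dropLast_sublist _)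
  rw [← card_neighborFinset_eq_degree,
    ← Finset.card_image_of_injOn (hinj.mono (by simp +contextual))]
  congr 1
  ext x
  simp only [Finset.mem_image, Finset.mem_filter, List.mem_toFinset, mem_neighborFinset]
  constructor
  · rintro ⟨d, ⟨-, hd⟩, rfl⟩
    exact hd.symm
  · intro hx
    have hmem : x ∈ p.darts.map (·.fst) ++ [v] := p.map_fst_darts_append ▸ hp.mem_support x
    rcases List.mem_append.mp hmem with hmem | hmem
    · obtain ⟨d, hd, rfl⟩ := List.mem_map.mp hmem
      exact ⟨d, ⟨hd, hx.symm⟩, rfl⟩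
    · exact absurd (List.mem_singleton.mp hmem ▸ hx) (G.irrefl)

theorem IsHamiltonian.card_filter_darts_adj_snd {u v : V} {p : G.Walk u v}
    (hp : p.IsHamiltonian) :
    (p.darts.toFinset.filter fun d => G.Adj u d.snd).card = G.degree u := by
  rw [← hp.reverse.card_filter_darts_fst_adj]
  refine Finset.card_nbij' Dart.symm Dart.symm ?_ ?_ ?_ ?_ <;> intro d <;> simp [G.adj_comm]

theorem IsHamiltonian.exists_mem_darts_adj_adj {u v : V} {p : G.Walk u v} (hp : p.IsHamiltonian)
    (hdeg : Fintype.card V ≤ G.degree u + G.degree v) :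
    ∃ d ∈ p.darts, G.Adj u d.snd ∧ G.Adj d.fst v := by
  set D := p.darts.toFinset
  set A := D.filter fun d => G.Adj u d.snd
  set B := D.filter fun d => G.Adj d.fst v
  have hD : D.card + 1 = Fintype.card V := by
    have := Fintype.card_pos_iff.mpr ⟨u⟩
    rw [List.toFinset_card_of_nodup (darts_nodup_of_support_nodup hp.isPath.support_nodup),
      length_darts, hp.length_eq]
    omega
  obtain ⟨d, hd⟩ : (A ∩ B).Nonempty := by
    rw [← Finset.card_pos]
    have := Finset.card_union_add_card_inter A B
    have := Finset.card_le_card (Finset.union_subset (Finset.filter_subset _ D)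
      (Finset.filter_subset _ D) : A ∪ B ⊆ D)
    rw [hp.card_filter_darts_adj_snd, hp.card_filter_darts_fst_adj] at *
    omega
  simp only [A, B, D, Finset.mem_inter, Finset.mem_filter, List.mem_toFinset] at hd
  exact ⟨d, hd.1.1, hd.1.2, hd.2.2⟩

theorem IsHamiltonian.exists_isHamiltonianCycle {u v : V} {p : G.Walk u v}
    (hp : p.IsHamiltonian) (hn : 3 ≤ Fintype.card V)
    (hdeg : Fintype.card V ≤ G.degree u + G.degree v) :
    ∃ (w : V) (c : G.Walk w w), c.IsHamiltonianCycle := by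
  obtain ⟨d, hd, hud, hdv⟩ := hp.exists_mem_darts_adj_adj hdeg
  obtain ⟨q, r, rfl⟩ := exists_eq_append_cons_of_mem_darts hd
  exact ⟨_, _, hp.isHamiltonianCycle_cons_append_cons_reverse hud hdv hn⟩

end SimpleGraph.Walk

namespace SimpleGraph

variable {V : Type*}

theorem mem_edgeSet_of_mem_edgeSet_sup_edge {G : SimpleGraph V} {u v : V} {e : Sym2 V}
    (he : e ∈ (G ⊔ edge u v).edgeSet) (hne : e ≠ s(u, v)) : e ∈ G.edgeSet := by
  rw [edgeSet_sup] at he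
  exact he.resolve_right fun h => hne (edgeSet_edge_subset h)

variable [Fintype V] [DecidableEq V]

theorem IsHamiltonian.of_sup_edge {G : SimpleGraph V} [DecidableRel G.Adj] {u v : V}
    (hn : 3 ≤ Fintype.card V) (hdeg : Fintype.card V ≤ G.degree u + G.degree v)
    (hG : (G ⊔ edge u v).IsHamiltonian) : G.IsHamiltonian := by
  intro hV
  obtain ⟨w, c, hc⟩ := hG hV
  have hsub : ∀ {x y : V} (p : (G ⊔ edge u v).Walk x y), s(u, v) ∉ p.edges →
      ∀ e ∈ p.edges, e ∈ G.edgeSet := fun p hp e he =>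
    mem_edgeSet_of_mem_edgeSet_sup_edge (p.edges_subset_edgeSet he) (ne_of_mem_of_not_mem he hp)
  by_cases he : s(u, v) ∈ c.edges
  · obtain ⟨q, hq, hqe⟩ := hc.exists_isHamiltonian_of_mem_edges he
    exact (hq.transfer (hsub q hqe)).exists_isHamiltonianCycle hn hdeg
  · exact ⟨w, _, hc.transfer (hsub c he)⟩

theorem isHamiltonian_top (hn : 3 ≤ Fintype.card V) : (⊤ : SimpleGraph V).IsHamiltonian := by
  intro _
  obtain ⟨n, hn⟩ : ∃ n, Fintype.card V = n + 3 := ⟨Fintype.card V - 3, by omega⟩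
  let e := Fintype.equivFinOfCardEq hn
  let f : cycleGraph (n + 3) →g (⊤ : SimpleGraph V) :=
    (Iso.completeGraph e.symm).toHom.comp (Hom.ofLE le_top)
  refine ⟨e.symm 0, (cycleGraph.cycle n).map f, .map (f := f) e.symm.bijective ?_⟩
  rw [Walk.isHamiltonianCycle_iff_isCycle_and_length_eq]
  exact ⟨cycleGraph.isCycle_cycle, by simp [cycleGraph.length_cycle]⟩

theorem isHamiltonian_of_card_le_degree_add_degree (G : SimpleGraph V) [DecidableRel G.Adj]
    (hn : 3 ≤ Fintype.card V)
    (hG : ∀ u v, u ≠ v → ¬G.Adj u v → Fintype.card V ≤ G.degree u + G.degree v) :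
    G.IsHamiltonian := by
  revert ‹DecidableRel G.Adj› hG
  induction G using WellFoundedGT.induction with
  | _ G ih =>
  intro _ hG
  by_cases hcompl : ∀ u v, u ≠ v → G.Adj u v
  · exact (isHamiltonian_top hn).mono fun u v => hcompl u v
  push Not at hcompl
  obtain ⟨u, v, huv, hnadj⟩ := hcompl
  have hlt : G < G ⊔ edge u v := left_lt_sup.mpr fun h => hnadj (h (by simp [edge_adj, huv]))
  refine (ih _ hlt ?_).of_sup_edge hn (hG u v huv hnadj)
  intro x y hxy hnadj'
  exact (hG x y hxy fun h => hnadj' (le_sup_left (a := G) h)).trans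
    (add_le_add (degree_le_of_le le_sup_left) (degree_le_of_le le_sup_left))

end SimpleGraph

/-- Dirac's theorem: a finite simple graph on n ≥ 3 vertices in which every
vertex has degree at least n/2 contains a Hamilton cycle. -/
theorem stmt_10 (V : Type*) [Fintype V] [DecidableEq V] (G : SimpleGraph V)
    [DecidableRel G.Adj] (hn : 3 ≤ Fintype.card V)
    (hdeg : ∀ v : V, Fintype.card V ≤ 2 * G.degree v) :
    ∃ (v : V) (p : G.Walk v v), p.IsHamiltonianCycle :=
  G.isHamiltonian_of_card_le_degree_add_degree hn
    (fun u v _ _ => by have := hdeg u; have := hdeg v; omega) (by omega)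
end

section
/- In A* = F_2[ξ_1, ξ_2, ...], define c recursively by c(ξ_0) = 1 and Σ_{k=0}^{i} ξ_{i-k}^{2^k} c(ξ_k) = 0 for i ≥ 1, extended as an F_2-algebra homomorphism. Then c(ξ_i) = Σ_π Π_{k=1}^{ℓ(π)} ξ_{π(k)}^{2^{σ(k)}}, where the sum is over all ordered partitions (compositions) π of i into positive parts, ℓ(π) is the number of parts, π(k) is the k-th part, and σ(k) = π(1) + ... + π(k-1). -/
/-!
Removing the last block, of size `i - k`, of a composition of `i` leaves a composition of `k`,
and that block contributes the factor `ξ_{i-k}^{2^k}`. Hence the sum over compositions satisfies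
`F i = Σ_{k<i} ξ_{i-k}^{2^k} F k` with `F 0 = 1`, which in characteristic 2 is exactly the
recursion defining `c(ξ_i)`, and such a recursion has only one solution.
-/

/-- The generators ξᵢ of the mod 2 dual Steenrod algebra A* = F₂[ξ₁, ξ₂, …],
with the convention ξ₀ = 1; the variable `X i` plays the role of ξ_{i+1}. -/
noncomputable def xi : ℕ → MvPolynomial ℕ (ZMod 2)
  | 0 => 1
  | i + 1 => MvPolynomial.X i

open Finset

namespace Composition

def appendBlock {k n : ℕ} (σ : Composition k) (h : k < n) : Composition n where
  blocks := σ.blocks ++ [n - k]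
  blocks_pos hj := by
    rcases List.mem_append.1 hj with hj | hj
    · exact σ.blocks_pos hj
    · rw [List.mem_singleton.1 hj]
      exact Nat.sub_pos_of_lt h
  blocks_sum := by simp [σ.blocks_sum, Nat.add_sub_cancel' h.le]

theorem bijective_sigma_appendBlock {n : ℕ} (hn : 0 < n) :
    Function.Bijective fun p : Σ k : Fin n, Composition k => p.2.appendBlock p.1.isLt := by
  constructor
  · rintro ⟨⟨k, hk⟩, σ⟩ ⟨⟨k', hk'⟩, τ⟩ h
    have hb : σ.blocks ++ [n - k] = τ.blocks ++ [n - k'] := congrArg blocks h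
    obtain ⟨hστ, hlast⟩ := List.append_inj' hb rfl
    obtain rfl : k = k' := by have := List.singleton_inj.1 hlast; omega
    obtain rfl : σ = τ := Composition.ext hστ
    rfl
  · intro π
    have hne : π.blocks ≠ [] := by simpa [blocks_eq_nil] using hn.ne'
    have hsplit := List.dropLast_append_getLast hne
    have hsum : π.blocks.dropLast.sum + π.blocks.getLast hne = n := by
      simpa [π.blocks_sum] using congrArg List.sum hsplit
    have hlast_pos : 0 < π.blocks.getLast hne := π.blocks_pos (List.getLast_mem hne)
    let σ : Composition π.blocks.dropLast.sum :=
      ⟨π.blocks.dropLast, fun hj => π.blocks_pos (List.dropLast_subset _ hj), rfl⟩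
    refine ⟨⟨⟨π.blocks.dropLast.sum, by omega⟩, σ⟩, ?_⟩
    ext1
    change π.blocks.dropLast ++ [n - π.blocks.dropLast.sum] = π.blocks
    rw [show n - π.blocks.dropLast.sum = π.blocks.getLast hne by omega, hsplit]

theorem sum_eq_sum_range_sum_append {M : Type*} [AddCommMonoid M] (f : List ℕ → M) {n : ℕ}
    (hn : 0 < n) :
    ∑ π : Composition n, f π.blocks =
      ∑ k ∈ range n, ∑ σ : Composition k, f (σ.blocks ++ [n - k]) := by
  rw [← Fin.sum_univ_eq_sum_range (fun k => ∑ σ : Composition k, f (σ.blocks ++ [n - k])),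
    ← (bijective_sigma_appendBlock hn).sum_comp, Fintype.sum_sigma]
  rfl

end Composition

section Milnor

variable {R : Type*} [CommSemiring R] (x : ℕ → R)

noncomputable def milnorMonomial (l : List ℕ) : R :=
  ∏ k ∈ range l.length, x (l.getD k 0) ^ 2 ^ (l.take k).sum

theorem milnorMonomial_append_singleton (l : List ℕ) (a : ℕ) :
    milnorMonomial x (l ++ [a]) = milnorMonomial x l * x a ^ 2 ^ l.sum := by
  rw [milnorMonomial, List.length_append, List.length_singleton, prod_range_succ,
    List.getD_append_right _ _ _ _ le_rfl, Nat.sub_self, List.take_append_of_le_length le_rfl,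
    List.take_length]
  congr 1
  refine prod_congr rfl fun k hk => ?_
  have hk : k < l.length := mem_range.1 hk
  rw [List.getD_append _ _ _ _ hk, List.take_append_of_le_length hk.le]

theorem prod_blocksFun_eq_milnorMonomial {n : ℕ} (π : Composition n) :
    ∏ k : Fin π.length, x (π.blocksFun k) ^ 2 ^ π.sizeUpTo k = milnorMonomial x π.blocks := by
  rw [milnorMonomial, ← Fin.prod_univ_eq_prod_range]
  simp [Composition.blocksFun, Composition.sizeUpTo]

noncomputable def milnorSum (n : ℕ) : R :=
  ∑ π : Composition n, milnorMonomial x π.blocks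

theorem milnorSum_zero : milnorSum x 0 = 1 := by
  have hnil (π : Composition 0) : π.blocks = [] := π.blocks_eq_nil.2 rfl
  simp [milnorSum, hnil, milnorMonomial, composition_card]

theorem milnorSum_eq_sum_range {n : ℕ} (hn : 0 < n) :
    milnorSum x n = ∑ k ∈ range n, x (n - k) ^ 2 ^ k * milnorSum x k := by
  rw [milnorSum, Composition.sum_eq_sum_range_sum_append _ hn]
  refine sum_congr rfl fun k _ => ?_
  rw [milnorSum, mul_sum]
  refine sum_congr rfl fun σ _ => ?_
  rw [milnorMonomial_append_singleton, σ.blocks_sum, mul_comm]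

theorem eq_milnorSum_of_eq_sum_range {f : ℕ → R} (h0 : f 0 = 1)
    (hf : ∀ n, 0 < n → f n = ∑ k ∈ range n, x (n - k) ^ 2 ^ k * f k) (n : ℕ) :
    f n = milnorSum x n := by
  induction n using Nat.strong_induction_on with
  | _ n ih =>
    rcases n.eq_zero_or_pos with rfl | hn
    · rw [h0, milnorSum_zero]
    · rw [hf n hn, milnorSum_eq_sum_range x hn]
      exact sum_congr rfl fun k hk => by rw [ih k (mem_range.1 hk)]

end Milnor

theorem stmt_15_general
    (c : MvPolynomial ℕ (ZMod 2) →ₐ[ZMod 2] MvPolynomial ℕ (ZMod 2))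
    (hc : ∀ i, 1 ≤ i →
      ∑ k ∈ Finset.range (i + 1), (xi (i - k)) ^ (2 ^ k) * c (xi k) = 0)
    (i : ℕ) :
    c (xi i) = ∑ π : Composition i,
      ∏ k : Fin π.length, (xi (π.blocksFun k)) ^ (2 ^ (π.sizeUpTo k.val)) := by
  have hrec (n : ℕ) (hn : 0 < n) :
      c (xi n) = ∑ k ∈ range n, xi (n - k) ^ 2 ^ k * c (xi k) := by
    have h := hc n hn
    rw [sum_range_succ, Nat.sub_self, xi, one_pow, one_mul, CharTwo.add_eq_zero] at h
    exact h.symm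
  simp_rw [prod_blocksFun_eq_milnorMonomial]
  exact eq_milnorSum_of_eq_sum_range xi (f := fun n => c (xi n)) (map_one c) hrec i

/-- Milnor's formula for the antipode: if c is an algebra map satisfying the
recursion Σ_{k=0}^{i} ξ_{i-k}^{2^k} c(ξ_k) = 0 for i ≥ 1, then c(ξᵢ) is the sum
over compositions π of i of Π_k ξ_{π(k)}^{2^{σ(k)}}. -/
theorem stmt_15
    (c : MvPolynomial ℕ (ZMod 2) →ₐ[ZMod 2] MvPolynomial ℕ (ZMod 2))
    (hc : ∀ i, 1 ≤ i →
      ∑ k ∈ Finset.range (i + 1), (xi (i - k)) ^ (2 ^ k) * c (xi k) = 0)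
    (i : ℕ) (hi : 1 ≤ i) :
    c (xi i) = ∑ π : Composition i,
      ∏ k : Fin π.length, (xi (π.blocksFun k)) ^ (2 ^ (π.sizeUpTo k.val)) :=
  stmt_15_general c hc i
end
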